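/- Let W★ ∈ ℝ^{p×m} be a matrix of rank r with thin singular value decomposition W★ = U D V⊤, and define the projection operators P_{M⊥}(B) := P_{U⊥} B P_{V⊥}, where P_{U⊥} and P_{V⊥} are the orthogonal projections onto the orthogonal complements of the column space and row space of W★, and P_M(B) := B − P_{M⊥}(B). Then for every B ∈ ℝ^{p×m}, ‖W★ + B‖_* ≥ ‖W★‖_* + ‖P_{M⊥}(B)‖_* − ‖P_M(B)‖_*. -/

import Mathlib

/-!
The nuclear norm is dual to the operator norm: `trace (Zᵀ * A) ≤ ‖A‖_*` for every contraction
`Z`, with equality for `Z = A U Σ⁻¹ Uᵀ`, where `U` diagonalizes `Aᵀ * A` with eigenvalues `Σ²`.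
This gives the triangle inequality. Since `Pu * W★ = 0` and `W★ * Pv = 0`, maximizers for `W★`
and for `Pu * B * Pv`, compressed by `1 - Pu, 1 - Pv` and by `Pu, Pv` respectively, add up to a
contraction, so `‖W★ + Pu B Pv‖_* ≥ ‖W★‖_* + ‖Pu B Pv‖_*`; the triangle inequality applied to
`W★ + Pu B Pv = (W★ + B) - (B - Pu B Pv)` concludes.
-/

open Matrix

/-- The nuclear norm of a real matrix: the sum of its singular values
(square roots of the eigenvalues of `Aᵀ * A`). -/
noncomputable def nuclearNorm {p m : Type*} [Fintype p] [Fintype m] [DecidableEq m]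
    (A : Matrix p m ℝ) : ℝ :=
  ∑ i, Real.sqrt ((Matrix.isHermitian_conjTranspose_mul_self A).eigenvalues i)

section DotProduct

variable {p m n : Type*}

theorem transpose_mul_apply_eq_col_dotProduct_col [Fintype p] (X : Matrix p m ℝ)
    (Y : Matrix p n ℝ) (i : m) (j : n) : (Xᵀ * Y) i j = X.col i ⬝ᵥ Y.col j :=
  rfl

theorem col_mul_eq_mulVec_col [Fintype m] (X : Matrix p m ℝ) (U : Matrix m n ℝ) (i : n) :
    (X * U).col i = X *ᵥ U.col i :=
  rfl

variable [Fintype p] [Fintype m] [Fintype n]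

theorem mulVec_dotProduct_mulVec (M : Matrix p m ℝ) (N : Matrix p n ℝ) (x : m → ℝ) (y : n → ℝ) :
    M *ᵥ x ⬝ᵥ N *ᵥ y = x ⬝ᵥ (Mᵀ * N) *ᵥ y := by
  rw [← mulVec_mulVec, mulVec_transpose, dotProduct_comm x, ← dotProduct_mulVec, dotProduct_comm]

theorem dotProduct_le_sqrt_mul_sqrt (x y : n → ℝ) : x ⬝ᵥ y ≤ √(x ⬝ᵥ x) * √(y ⬝ᵥ y) := by
  simpa [dotProduct, pow_two] using Real.sum_mul_le_sqrt_mul_sqrt Finset.univ x y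

end DotProduct

section Projection

variable {n : Type*} [Fintype n] {P : Matrix n n ℝ}

theorem isStarProjection_of_transpose_eq (hs : Pᵀ = P) (hi : P * P = P) : IsStarProjection P :=
  ⟨hi, by rw [IsSelfAdjoint, star_eq_conjTranspose, conjTranspose_eq_transpose_of_trivial, hs]⟩

theorem IsStarProjection.transpose_eq (hP : IsStarProjection P) : Pᵀ = P := by
  rw [← conjTranspose_eq_transpose_of_trivial]; exact hP.isSelfAdjoint

variable [DecidableEq n]

theorem IsStarProjection.mulVec_dotProduct_one_sub_mulVec (hP : IsStarProjection P)
    (x y : n → ℝ) : P *ᵥ x ⬝ᵥ (1 - P) *ᵥ y = 0 := by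
  rw [mulVec_dotProduct_mulVec, hP.transpose_eq, hP.mul_one_sub_self, zero_mulVec, dotProduct_zero]

theorem IsStarProjection.dotProduct_self_eq (hP : IsStarProjection P) (x : n → ℝ) :
    x ⬝ᵥ x = P *ᵥ x ⬝ᵥ P *ᵥ x + (1 - P) *ᵥ x ⬝ᵥ (1 - P) *ᵥ x := by
  have hcross := hP.mulVec_dotProduct_one_sub_mulVec x x
  have hx : x = P *ᵥ x + (1 - P) *ᵥ x := by rw [sub_mulVec, one_mulVec, add_sub_cancel]
  conv_lhs => rw [hx]
  rw [add_dotProduct, dotProduct_add, dotProduct_add, dotProduct_comm ((1 - P) *ᵥ x), hcross]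
  ring

end Projection

section Contraction

variable {p m n : Type*} [Fintype p] [Fintype m] [Fintype n]

def IsContraction (Z : Matrix p m ℝ) : Prop :=
  ∀ x : m → ℝ, Z *ᵥ x ⬝ᵥ Z *ᵥ x ≤ x ⬝ᵥ x

theorem IsContraction.mul {X : Matrix p m ℝ} {Y : Matrix m n ℝ} (hX : IsContraction X)
    (hY : IsContraction Y) : IsContraction (X * Y) := fun x => by
  rw [← mulVec_mulVec]; exact (hX _).trans (hY x)

theorem isContraction_of_transpose_mul_self_eq_diagonal [DecidableEq m] {Z : Matrix p m ℝ}
    {e : m → ℝ} (hZ : Zᵀ * Z = diagonal e) (he : ∀ i, e i ≤ 1) : IsContraction Z := fun x => by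
  rw [mulVec_dotProduct_mulVec, hZ]
  simp only [dotProduct, mulVec_diagonal]
  exact Finset.sum_le_sum fun i _ => by nlinarith [he i, mul_self_nonneg (x i)]

theorem IsStarProjection.isContraction [DecidableEq n] {P : Matrix n n ℝ}
    (hP : IsStarProjection P) : IsContraction P := fun x => by
  rw [hP.dotProduct_self_eq x, le_add_iff_nonneg_right]
  exact dotProduct_self_star_nonneg _

end Contraction

section Duality

variable {p m : Type*} [Fintype p] [Fintype m]

theorem trace_transpose_mul_mul_transpose_mul (X : Matrix p p ℝ) (Z W : Matrix p m ℝ)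
    (Y : Matrix m m ℝ) : trace ((X * Z * Y)ᵀ * W) = trace (Zᵀ * (Xᵀ * W * Yᵀ)) := by
  rw [transpose_mul, transpose_mul, Matrix.mul_assoc, trace_mul_comm]
  simp only [Matrix.mul_assoc]

variable [DecidableEq m]

theorem exists_orthogonal_gram_eq_diagonal_eigenvalues (A : Matrix p m ℝ) :
    ∃ U : Matrix m m ℝ, Uᵀ * U = 1 ∧ U * Uᵀ = 1 ∧
      (A * U)ᵀ * (A * U) = diagonal (isHermitian_conjTranspose_mul_self A).eigenvalues := by
  set hH := isHermitian_conjTranspose_mul_self A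
  have hdiag := hH.conjStarAlgAut_star_eigenvectorUnitary
  rw [Unitary.conjStarAlgAut_star_apply] at hdiag
  set U : Matrix m m ℝ := (hH.eigenvectorUnitary : Matrix m m ℝ)
  have hstar : star U = Uᵀ := by rw [star_eq_conjTranspose, conjTranspose_eq_transpose_of_trivial]
  refine ⟨U, ?_, ?_, ?_⟩
  · rw [← hstar]; exact mem_unitaryGroup_iff'.mp hH.eigenvectorUnitary.2
  · rw [← hstar]; exact mem_unitaryGroup_iff.mp hH.eigenvectorUnitary.2
  · simpa [hstar, transpose_mul, Matrix.mul_assoc] using hdiag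

theorem trace_transpose_mul_eq_sum_mulVec_col {U : Matrix m m ℝ} (hU : U * Uᵀ = 1)
    (Z A : Matrix p m ℝ) : trace (Zᵀ * A) = ∑ i, Z *ᵥ U.col i ⬝ᵥ A *ᵥ U.col i := by
  calc trace (Zᵀ * A) = trace (Uᵀ * (Zᵀ * A * U)) := by
        rw [trace_mul_comm Uᵀ, Matrix.mul_assoc, hU, Matrix.mul_one]
    _ = trace ((Z * U)ᵀ * (A * U)) := by simp only [transpose_mul, Matrix.mul_assoc]
    _ = _ := rfl

theorem trace_transpose_mul_le_nuclearNorm {Z : Matrix p m ℝ} (hZ : IsContraction Z)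
    (A : Matrix p m ℝ) : trace (Zᵀ * A) ≤ nuclearNorm A := by
  obtain ⟨U, hUU, hUU', hAU⟩ := exists_orthogonal_gram_eq_diagonal_eigenvalues A
  rw [trace_transpose_mul_eq_sum_mulVec_col hUU' Z A, nuclearNorm]
  refine Finset.sum_le_sum fun i _ => ?_
  have hu : U.col i ⬝ᵥ U.col i = 1 := by
    rw [← transpose_mul_apply_eq_col_dotProduct_col, hUU, one_apply_eq]
  have hAu : A *ᵥ U.col i ⬝ᵥ A *ᵥ U.col i =
      (isHermitian_conjTranspose_mul_self A).eigenvalues i := by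
    rw [← col_mul_eq_mulVec_col, ← transpose_mul_apply_eq_col_dotProduct_col, hAU,
      diagonal_apply_eq]
  calc Z *ᵥ U.col i ⬝ᵥ A *ᵥ U.col i
      ≤ √(Z *ᵥ U.col i ⬝ᵥ Z *ᵥ U.col i) * √(A *ᵥ U.col i ⬝ᵥ A *ᵥ U.col i) :=
        dotProduct_le_sqrt_mul_sqrt _ _
    _ ≤ 1 * √(A *ᵥ U.col i ⬝ᵥ A *ᵥ U.col i) := by
        gcongr
        exact Real.sqrt_le_one.mpr (hu ▸ hZ _)
    _ = _ := by rw [one_mul, hAu]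

theorem exists_isContraction_trace_transpose_mul_eq_nuclearNorm (A : Matrix p m ℝ) :
    ∃ Z : Matrix p m ℝ, IsContraction Z ∧ trace (Zᵀ * A) = nuclearNorm A := by
  obtain ⟨U, -, hUU', hAU⟩ := exists_orthogonal_gram_eq_diagonal_eigenvalues A
  set σ : m → ℝ := (isHermitian_conjTranspose_mul_self A).eigenvalues
  -- `0⁻¹ = 0` makes `c` vanish exactly on the kernel of `Aᵀ * A`.
  set c : m → ℝ := fun i => (√(σ i))⁻¹
  have hcσ : ∀ i, c i * σ i = √(σ i) := fun i => by rw [inv_mul_eq_div, Real.div_sqrt]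
  refine ⟨A * U * diagonal c * Uᵀ, ?_, ?_⟩
  · refine IsContraction.mul (isContraction_of_transpose_mul_self_eq_diagonal
      (e := fun i => c i * (σ i * c i)) ?_ fun i => ?_) ?_
    · rw [transpose_mul, diagonal_transpose, Matrix.mul_assoc, ← Matrix.mul_assoc (A * U)ᵀ, hAU,
        diagonal_mul_diagonal, diagonal_mul_diagonal]
    · rw [← mul_assoc, hcσ]; exact mul_inv_le_one
    · refine isContraction_of_transpose_mul_self_eq_diagonal (e := fun _ => 1) ?_ fun _ => le_rfl
      rw [transpose_transpose, hUU', diagonal_one]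
  · calc trace ((A * U * diagonal c * Uᵀ)ᵀ * A)
        = trace (diagonal c * ((A * U)ᵀ * (A * U))) := by
          rw [transpose_mul, transpose_transpose, Matrix.mul_assoc, trace_mul_comm]
          simp only [transpose_mul, diagonal_transpose, Matrix.mul_assoc]
      _ = nuclearNorm A := by
          rw [hAU, diagonal_mul_diagonal, trace_diagonal, nuclearNorm]
          exact Finset.sum_congr rfl fun i _ => hcσ i

theorem nuclearNorm_add_le (X Y : Matrix p m ℝ) :
    nuclearNorm (X + Y) ≤ nuclearNorm X + nuclearNorm Y := by
  obtain ⟨Z, hZ, hZXY⟩ := exists_isContraction_trace_transpose_mul_eq_nuclearNorm (X + Y)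
  rw [← hZXY, Matrix.mul_add, trace_add]
  exact add_le_add (trace_transpose_mul_le_nuclearNorm hZ X)
    (trace_transpose_mul_le_nuclearNorm hZ Y)

theorem nuclearNorm_neg (X : Matrix p m ℝ) : nuclearNorm (-X) = nuclearNorm X := by
  unfold nuclearNorm
  congr! 3
  simp

theorem nuclearNorm_sub_le (X Y : Matrix p m ℝ) :
    nuclearNorm (X - Y) ≤ nuclearNorm X + nuclearNorm Y := by
  simpa [sub_eq_add_neg, nuclearNorm_neg] using nuclearNorm_add_le X (-Y)

theorem isContraction_one_sub_mul_mul_one_sub_add_mul_mul [DecidableEq p] {P : Matrix p p ℝ}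
    {Q : Matrix m m ℝ} (hP : IsStarProjection P) (hQ : IsStarProjection Q) {Z₁ Z₂ : Matrix p m ℝ}
    (hZ₁ : IsContraction Z₁) (hZ₂ : IsContraction Z₂) :
    IsContraction ((1 - P) * Z₁ * (1 - Q) + P * Z₂ * Q) := fun x => by
  set a := (1 - P) *ᵥ Z₁ *ᵥ (1 - Q) *ᵥ x
  set b := P *ᵥ Z₂ *ᵥ Q *ᵥ x
  have ha : a ⬝ᵥ a ≤ (1 - Q) *ᵥ x ⬝ᵥ (1 - Q) *ᵥ x := by
    simpa only [← mulVec_mulVec] using (hP.one_sub.isContraction.mul hZ₁) ((1 - Q) *ᵥ x)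
  have hb : b ⬝ᵥ b ≤ Q *ᵥ x ⬝ᵥ Q *ᵥ x := by
    simpa only [← mulVec_mulVec] using (hP.isContraction.mul hZ₂) (Q *ᵥ x)
  have hab : b ⬝ᵥ a = 0 := hP.mulVec_dotProduct_one_sub_mulVec _ _
  simp only [add_mulVec, ← mulVec_mulVec]
  rw [hQ.dotProduct_self_eq x, add_dotProduct, dotProduct_add, dotProduct_add,
    dotProduct_comm a b, hab]
  linarith

/-- Norming dual matrices of `W` and of `P * B * Q` live on complementary blocks, so their
compressions glue into one for the sum. -/
theorem nuclearNorm_add_nuclearNorm_le_nuclearNorm_add [DecidableEq p] {P : Matrix p p ℝ}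
    {Q : Matrix m m ℝ} (hP : IsStarProjection P) (hQ : IsStarProjection Q) {W : Matrix p m ℝ}
    (hPW : P * W = 0) (hWQ : W * Q = 0) (B : Matrix p m ℝ) :
    nuclearNorm W + nuclearNorm (P * B * Q) ≤ nuclearNorm (W + P * B * Q) := by
  obtain ⟨Z₁, hZ₁, hZ₁W⟩ := exists_isContraction_trace_transpose_mul_eq_nuclearNorm W
  obtain ⟨Z₂, hZ₂, hZ₂C⟩ := exists_isContraction_trace_transpose_mul_eq_nuclearNorm (P * B * Q)
  have hP' : (1 - P)ᵀ = 1 - P := hP.one_sub.transpose_eq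
  have hQ' : (1 - Q)ᵀ = 1 - Q := hQ.one_sub.transpose_eq
  have hWW : (1 - P) * W * (1 - Q) = W := by
    rw [Matrix.sub_mul, Matrix.one_mul, hPW, sub_zero, Matrix.mul_sub, Matrix.mul_one, hWQ,
      sub_zero]
  have hWC : (1 - P) * (P * B * Q) * (1 - Q) = 0 := by
    rw [← Matrix.mul_assoc, ← Matrix.mul_assoc, hP.one_sub_mul_self, Matrix.zero_mul,
      Matrix.zero_mul, Matrix.zero_mul]
  have hCW : P * W * Q = 0 := by rw [hPW, Matrix.zero_mul]
  have hCC : P * (P * B * Q) * Q = P * B * Q := by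
    rw [← Matrix.mul_assoc, ← Matrix.mul_assoc, hP.isIdempotentElem.eq, Matrix.mul_assoc _ Q,
      hQ.isIdempotentElem.eq]
  calc nuclearNorm W + nuclearNorm (P * B * Q)
      = trace (((1 - P) * Z₁ * (1 - Q) + P * Z₂ * Q)ᵀ * (W + P * B * Q)) := by
        rw [transpose_add, Matrix.add_mul, Matrix.mul_add, Matrix.mul_add, trace_add, trace_add,
          trace_add]
        simp only [trace_transpose_mul_mul_transpose_mul, hP', hQ', hP.transpose_eq,
          hQ.transpose_eq, hWW, hWC, hCW, hCC, Matrix.mul_zero, trace_zero, hZ₁W, hZ₂C]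
        ring
    _ ≤ nuclearNorm (W + P * B * Q) := trace_transpose_mul_le_nuclearNorm
        (isContraction_one_sub_mul_mul_one_sub_add_mul_mul hP hQ hZ₁ hZ₂) _

end Duality

theorem nuclearNorm_decomposability_general
    {p m : ℕ} (Wstar B : Matrix (Fin p) (Fin m) ℝ)
    (Pu : Matrix (Fin p) (Fin p) ℝ) (Pv : Matrix (Fin m) (Fin m) ℝ)
    (hPu_symm : Puᵀ = Pu) (hPu_idem : Pu * Pu = Pu)
    (hPu_ker : ∀ x : Fin p → ℝ, Pu *ᵥ x = 0 ↔ ∃ y : Fin m → ℝ, Wstar *ᵥ y = x)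
    (hPv_symm : Pvᵀ = Pv) (hPv_idem : Pv * Pv = Pv)
    (hPv_ker : ∀ x : Fin m → ℝ, Pv *ᵥ x = 0 ↔ ∃ y : Fin p → ℝ, Wstarᵀ *ᵥ y = x) :
    nuclearNorm (Wstar + B) ≥
      nuclearNorm Wstar + nuclearNorm (Pu * B * Pv) - nuclearNorm (B - Pu * B * Pv) := by
  have hPuW : Pu * Wstar = 0 := ext_iff_mulVec.mpr fun y => by
    rw [← mulVec_mulVec, (hPu_ker _).mpr ⟨y, rfl⟩, zero_mulVec]
  have hPvWt : Pv * Wstarᵀ = 0 := ext_iff_mulVec.mpr fun y => by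
    rw [← mulVec_mulVec, (hPv_ker _).mpr ⟨y, rfl⟩, zero_mulVec]
  have hWPv : Wstar * Pv = 0 := by
    simpa [transpose_mul, hPv_symm] using congrArg transpose hPvWt
  have hsplit := nuclearNorm_add_nuclearNorm_le_nuclearNorm_add
    (isStarProjection_of_transpose_eq hPu_symm hPu_idem)
    (isStarProjection_of_transpose_eq hPv_symm hPv_idem) hPuW hWPv B
  have htri := nuclearNorm_sub_le (Wstar + B) (B - Pu * B * Pv)
  rw [show Wstar + B - (B - Pu * B * Pv) = Wstar + Pu * B * Pv by abel] at htri
  linarith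

/-- **Per-group decomposability of the nuclear norm.**
Let `W★ ∈ ℝ^{p×m}` have rank `r`, let `Pu` be the orthogonal projection onto the
orthogonal complement of the column space of `W★` (characterized by being symmetric,
idempotent, and having kernel exactly the column space of `W★`), and let `Pv` be the
orthogonal projection onto the orthogonal complement of the row space of `W★`
(symmetric, idempotent, kernel = row space of `W★` = column space of `W★ᵀ`).
With `P_{M⊥}(B) = Pu * B * Pv` and `P_M(B) = B - Pu * B * Pv`, for every `B`:
`‖W★ + B‖_* ≥ ‖W★‖_* + ‖P_{M⊥}(B)‖_* − ‖P_M(B)‖_*`. -/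
theorem nuclearNorm_decomposability
    {p m : ℕ} (Wstar B : Matrix (Fin p) (Fin m) ℝ) (r : ℕ)
    (hrank : Wstar.rank = r)
    (Pu : Matrix (Fin p) (Fin p) ℝ) (Pv : Matrix (Fin m) (Fin m) ℝ)
    (hPu_symm : Puᵀ = Pu) (hPu_idem : Pu * Pu = Pu)
    (hPu_ker : ∀ x : Fin p → ℝ, Pu *ᵥ x = 0 ↔ ∃ y : Fin m → ℝ, Wstar *ᵥ y = x)
    (hPv_symm : Pvᵀ = Pv) (hPv_idem : Pv * Pv = Pv)
    (hPv_ker : ∀ x : Fin m → ℝ, Pv *ᵥ x = 0 ↔ ∃ y : Fin p → ℝ, Wstarᵀ *ᵥ y = x) :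
    nuclearNorm (Wstar + B) ≥
      nuclearNorm Wstar + nuclearNorm (Pu * B * Pv) - nuclearNorm (B - Pu * B * Pv) :=
  nuclearNorm_decomposability_general Wstar B Pu Pv hPu_symm hPu_idem hPu_ker hPv_symm hPv_idem
    hPv_ker
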